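/- arXiv:math/0510481 — 9 statements merged into one kernel-verified Lean document; each statement's English description precedes it below -/
import Mathlib

section
/- For every a ∈ L with a ≠ 0, every b ∈ L with b^q = a − [1] (i.e. b = T_1(a)), and every m ∈ ℕ, one has a^{q^m}·⟨b⟩_m = (a − [m])·⟨a⟩_m; equivalently ⟨T_1(a)⟩_m = a^{−q^m}·(a − [m])·⟨a⟩_m. -/
/-- The Carlitz bracket `[i] = x^{q^i} - x`. -/
def br (q : ℕ) {L : Type*} [Field L] (x : L) (i : ℕ) : L := x ^ q ^ i - x

/-- The Pochhammer-type symbol `⟨a⟩_m = ([0]-a)^{q^m} ([1]-a)^{q^{m-1}} ⋯ ([m-1]-a)^q`. -/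
def poch (q : ℕ) {L : Type*} [Field L] (x a : L) (m : ℕ) : L :=
  ∏ k ∈ Finset.range m, (br q x k - a) ^ q ^ (m - k)

lemma poch_succ (q : ℕ) {L : Type*} [Field L] (x a : L) (m : ℕ) :
    poch q x a (m + 1) = (poch q x a m) ^ q * (br q x m - a) ^ q := by
  unfold poch
  rw [Finset.prod_range_succ, ← Finset.prod_pow]
  congr 1
  · refine Finset.prod_congr rfl fun k hk => ?_
    rw [← pow_mul]
    congr 1
    have hk' : k ≤ m := Nat.le_of_lt_succ (by simpa using Nat.lt_succ_of_lt (Finset.mem_range.mp hk))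
    rw [show m + 1 - k = (m - k) + 1 from by omega, pow_succ]
  · rw [Nat.add_sub_cancel_left, pow_one]

theorem stmt0 {p v q : ℕ} (hp : p.Prime) (hv : 0 < v) (hq : q = p ^ v)
    {L : Type*} [Field L] [CharP L p] (x : L)
    (a b : L) (ha : a ≠ 0) (hb : b ^ q = a - br q x 1) (m : ℕ) :
    a ^ q ^ m * poch q x b m = (a - br q x m) * poch q x a m := by
  have hfrob : ∀ (s t : L), (s - t) ^ q = s ^ q - t ^ q := by
    intro s t; rw [hq]; haveI := Fact.mk hp; exact sub_pow_char_pow ..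
  have hkey : ∀ m : ℕ, (b - br q x m) ^ q = a - br q x (m + 1) := by
    intro m
    rw [hfrob, hb]
    unfold br
    rw [hfrob, ← pow_mul, ← pow_succ, pow_one]
    ring
  induction m with
  | zero => simp [poch, br]
  | succ m ih =>
    rw [poch_succ, poch_succ, pow_succ, pow_mul]
    have e1 : (a ^ q ^ m) ^ q * ((poch q x b m) ^ q * (br q x m - b) ^ q)
        = ((a ^ q ^ m * poch q x b m) * (br q x m - b)) ^ q := by
      rw [mul_pow, mul_pow]; ring
    rw [e1, ih]
    have e2 : (a - br q x m) * poch q x a m * (br q x m - b)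
        = (poch q x a m) * ((br q x m - a) * (b - br q x m)) := by ring
    rw [e2, mul_pow, mul_pow, hkey]
    ring
end

section
/- For every a ∈ L, every b ∈ L with b^q = a − [1] (i.e. b = T_1(a)), and every m ∈ ℕ, one has ⟨a⟩_{m+1} = −a^{q^{m+1}}·⟨b⟩_m^q. -/
/-- The Carlitz factorial `D_0 = 1`, `D_m = [m]·D_{m-1}^q`. -/
def DD (q : ℕ) {L : Type*} [Field L] (x : L) : ℕ → L
  | 0 => 1
  | m + 1 => br q x (m + 1) * (DD q x m) ^ q

theorem stmt1 {p v q : ℕ} (hp : p.Prime) (hv : 0 < v) (hq : q = p ^ v)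
    {L : Type*} [Field L] [CharP L p] (x : L)
    (a b : L) (hb : b ^ q = a - br q x 1) (m : ℕ) :
    poch q x a (m + 1) = -(a ^ q ^ (m + 1)) * (poch q x b m) ^ q := by
  haveI : Fact p.Prime := ⟨hp⟩
  have hexp : ∀ k, (br q x k - b) ^ q = br q x (k + 1) - a := by
    intro k
    subst hq
    simp only [br, pow_one] at hb ⊢
    rw [sub_pow_char_pow, sub_pow_char_pow, hb, ← pow_mul, ← pow_succ]
    ring
  have h0 : br q x 0 - a = -a := by simp [br]
  have hneg : (-a) ^ q ^ (m + 1) = -(a ^ q ^ (m + 1)) := by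
    rw [neg_pow]
    subst hq
    rw [← pow_mul, neg_one_pow_char_pow L p _, neg_one_mul]
  have hterm : ∀ k ∈ Finset.range m,
      (br q x (k + 1) - a) ^ q ^ (m + 1 - (k + 1)) = ((br q x k - b) ^ q ^ (m - k)) ^ q := by
    intro k _
    rw [Nat.succ_sub_succ, ← pow_right_comm, hexp]
  simp only [poch]
  rw [Finset.prod_range_succ', Finset.prod_congr rfl hterm, Finset.prod_pow, Nat.sub_zero,
    h0, hneg]
  ring
end

section
/- For every a ∈ L and every integer m ≥ 1, one has ⟨T_{−1}(a)⟩_m = −([1] + a^q)^{q^m}·⟨a⟩_{m−1}^q, where T_{−1}(a) = a^q + [1]. -/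
theorem stmt2 {p v q : ℕ} (hp : p.Prime) (hv : 0 < v) (hq : q = p ^ v)
    {L : Type*} [Field L] [CharP L p] (x : L)
    (a : L) (m : ℕ) (hm : 1 ≤ m) :
    poch q x (a ^ q + br q x 1) m
      = -((br q x 1 + a ^ q) ^ q ^ m) * (poch q x a (m - 1)) ^ q := by
  haveI := hp.one_lt
  haveI : Fact p.Prime := ⟨hp⟩
  obtain ⟨n, rfl⟩ : ∃ n, m = n + 1 := ⟨m - 1, (Nat.succ_pred_eq_of_pos hm).symm⟩
  have hsub : ∀ u w : L, (u - w) ^ q = u ^ q - w ^ q := by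
    intro u w; rw [hq]; exact sub_pow_char_pow ..
  have hneg : ∀ (u : L) (k : ℕ), (-u) ^ q ^ k = -(u ^ q ^ k) := by
    intro u k
    have : (-u) = 0 - u := by ring
    rw [this, hq, ← pow_mul, sub_pow_char_pow, zero_pow (by positivity), zero_sub]
  have key : ∀ k, br q x (k + 1) - (a ^ q + br q x 1) = (br q x k - a) ^ q := by
    intro k
    have h1 : (br q x k - a) ^ q = (x ^ q ^ k) ^ q - x ^ q - a ^ q := by
      rw [br, hsub, hsub]
    rw [h1, br, br, ← pow_mul, ← pow_succ]
    ring
  rw [poch, Finset.prod_range_succ']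
  have h0 : br q x 0 - (a ^ q + br q x 1) = -(br q x 1 + a ^ q) := by
    simp [br]; ring
  rw [h0, Nat.sub_zero, hneg]
  rw [show (∏ k ∈ Finset.range n,
        (br q x (k + 1) - (a ^ q + br q x 1)) ^ q ^ (n + 1 - (k + 1)))
      = (poch q x a n) ^ q by
    rw [poch, ← Finset.prod_pow]
    refine Finset.prod_congr rfl fun k hk => ?_
    rw [key k, ← pow_mul, ← pow_mul, Nat.succ_sub_succ, mul_comm (q ^ (n - k)) q]]
  simp
  ring
end

section
/- For every a ∈ L and every integer m ≥ 1 with a ≠ [m−1], one has ([m−1] − a)^q·⟨T_{−1}(a)⟩_m = −([1] + a^q)^{q^m}·⟨a⟩_m, i.e. ⟨T_{−1}(a)⟩_m = −([1]+a^q)^{q^m}·([m−1]−a)^{−q}·⟨a⟩_m, where T_{−1}(a) = a^q + [1]. -/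
section aux
variable {p v q : ℕ} {L : Type*} [Field L] [CharP L p]

lemma subq (hp : p.Prime) (hq : q = p ^ v) (n : ℕ) (y z : L) :
    (y - z) ^ q ^ n = y ^ q ^ n - z ^ q ^ n := by
  haveI : Fact p.Prime := ⟨hp⟩
  subst hq
  rw [show (p ^ v) ^ n = p ^ (v * n) from (pow_mul p v n).symm]
  exact sub_pow_char_pow y z _

lemma brshift (hp : p.Prime) (hq : q = p ^ v) (k : ℕ) (x a : L) :
    br q x (k + 1) - (a ^ q + br q x 1) = (br q x k - a) ^ q := by
  have h1 := subq hp hq 1 (br q x k) a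
  have h2 := subq hp hq 1 (x ^ q ^ k) x
  simp only [pow_one] at h1 h2
  rw [h1]
  simp only [br]
  rw [h2, ← pow_mul, ← pow_succ]
  ring
end aux

theorem stmt3 {p v q : ℕ} (hp : p.Prime) (hv : 0 < v) (hq : q = p ^ v)
    {L : Type*} [Field L] [CharP L p] (x : L)
    (a : L) (m : ℕ) (hm : 1 ≤ m) (ha : a ≠ br q x (m - 1)) :
    (br q x (m - 1) - a) ^ q * poch q x (a ^ q + br q x 1) m
      = -((br q x 1 + a ^ q) ^ q ^ m) * poch q x a m := by
  obtain ⟨n, rfl⟩ : ∃ n, m = n + 1 := ⟨m - 1, (Nat.succ_pred_eq_of_pos hm).symm⟩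
  simp only [Nat.add_sub_cancel]
  have hq0 : 0 < q := hq ▸ pow_pos hp.pos v
  have hneg : (br q x 0 - (a ^ q + br q x 1)) ^ q ^ (n + 1 - 0)
      = -((br q x 1 + a ^ q) ^ q ^ (n + 1)) := by
    have e0 : br q x 0 - (a ^ q + br q x 1) = 0 - (br q x 1 + a ^ q) := by
      simp only [br, pow_zero, pow_one]
      ring
    rw [Nat.sub_zero, e0, subq hp hq, zero_pow (pow_pos hq0 (n + 1)).ne', zero_sub]
  have hprod : ∏ k ∈ Finset.range n,
      (br q x (k + 1) - (a ^ q + br q x 1)) ^ q ^ (n + 1 - (k + 1))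
      = ∏ k ∈ Finset.range n, (br q x k - a) ^ q ^ (n + 1 - k) := by
    refine Finset.prod_congr rfl fun k hk => ?_
    have hk' : k < n := Finset.mem_range.mp hk
    rw [brshift hp hq, ← pow_mul, Nat.succ_sub_succ, ← pow_succ',
      Nat.succ_sub hk'.le]
  rw [poch, Finset.prod_range_succ', poch, Finset.prod_range_succ, hprod, hneg,
    Nat.add_sub_cancel_left, pow_one]
  ring
end

section
/- Let n ≥ 1 and let P, Q ∈ L[t_1,…,t_n] be polynomials such that there exists μ > 0 with ‖Q([i_1],…,[i_n])‖ ≥ μ for all i_1,…,i_n ∈ ℕ. Let c⁰ : ℕ^n → L be an initial family satisfying ‖c⁰(i_1,…,i_n)‖ ≤ C·r^{q^{i_1}+⋯+q^{i_n}} for some constants C, r > 0. Then there is a unique family c(m; i_1,…,i_n) ∈ L, defined for all m ∈ ℕ and i_1,…,i_n ∈ ℕ with m ≤ min(i_1,…,i_n), such that c(0; i_1,…,i_n) = c⁰(i_1,…,i_n) and Q([i_1],…,[i_n])^q · c(m+1; i_1+1,…,i_n+1) = −P([i_1],…,[i_n])^q · c(m; i_1,…,i_n)^q for all m ≤ min(i_1,…,i_n);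 moreover there exists a constant C₂ > 0 such that ‖c(m; i_1,…,i_n)‖ ≤ C₂^{q^m} · r^{q^{i_1}+⋯+q^{i_n}} for all m ≤ min(i_1,…,i_n). (This is the coefficient form of the unique solvability of the Cauchy problem {P(Δ_1,…,Δ_n) + Q(Δ_1,…,Δ_n)d}u = 0, lim_{z→0} z^{−1}u = u_0.) -/
open Classical in
noncomputable def cc (q : ℕ) {n : ℕ} {L : Type*} [Field L] (x : L)
    (P Q : MvPolynomial (Fin n) L) (c0 : (Fin n → ℕ) → L) : ℕ → (Fin n → ℕ) → L
  | 0 => c0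
  | (m+1) => fun i =>
      if ∀ k, 1 ≤ i k then
        -(MvPolynomial.eval (fun k => br q x (i k - 1)) P) ^ q
          * (cc q x P Q c0 m (fun k => i k - 1)) ^ q
          / (MvPolynomial.eval (fun k => br q x (i k - 1)) Q) ^ q
      else 0

lemma cc_succ_shift (q : ℕ) {n : ℕ} {L : Type*} [Field L] (x : L)
    (P Q : MvPolynomial (Fin n) L) (c0 : (Fin n → ℕ) → L) (m : ℕ) (i : Fin n → ℕ) :
    cc q x P Q c0 (m+1) (fun k => i k + 1)
      = -(MvPolynomial.eval (fun k => br q x (i k)) P) ^ q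
          * (cc q x P Q c0 m i) ^ q
          / (MvPolynomial.eval (fun k => br q x (i k)) Q) ^ q := by
  show (if ∀ k, 1 ≤ i k + 1 then _ else _) = _
  rw [if_pos (fun k => Nat.le_add_left 1 (i k))]
  simp

lemma eval_norm_le {n : ℕ} {L : Type*} [NormedField L] (P : MvPolynomial (Fin n) L)
    (f : Fin n → L) (hf : ∀ k, ‖f k‖ ≤ 1) :
    ‖MvPolynomial.eval f P‖ ≤ ∑ s ∈ P.support, ‖P.coeff s‖ := by
  rw [MvPolynomial.eval_eq']
  refine le_trans (norm_sum_le _ _) (Finset.sum_le_sum fun s _ => ?_)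
  rw [norm_mul]
  have h1 : ‖∏ k, f k ^ s k‖ ≤ 1 := by
    rw [norm_prod]
    refine Finset.prod_le_one (fun k _ => by positivity) (fun k _ => ?_)
    rw [norm_pow]
    exact pow_le_one₀ (norm_nonneg _) (hf k)
  calc ‖P.coeff s‖ * ‖∏ k, f k ^ s k‖ ≤ ‖P.coeff s‖ * 1 :=
        mul_le_mul_of_nonneg_left h1 (norm_nonneg _)
    _ = ‖P.coeff s‖ := mul_one _

/-- Coefficient form of the unique solvability of the Cauchy problem
$\{P(Δ_1,…,Δ_n)+Q(Δ_1,…,Δ_n)d\}u = 0$, $\lim_{z→0} z^{-1}u = u_0$. -/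
theorem stmt13 {p v q : ℕ} (hp : p.Prime) (hv : 0 < v) (hq : q = p ^ v)
    {L : Type*} [NormedField L] [CharP L p]
    (hna : ∀ a b : L, ‖a + b‖ ≤ max ‖a‖ ‖b‖)
    (x : L) (hx : ‖x‖ = (q : ℝ)⁻¹)
    (n : ℕ) (hn : 1 ≤ n) (P Q : MvPolynomial (Fin n) L)
    (μ : ℝ) (hμ : 0 < μ)
    (hQ : ∀ i : Fin n → ℕ, μ ≤ ‖MvPolynomial.eval (fun k => br q x (i k)) Q‖)
    (c0 : (Fin n → ℕ) → L) (C r : ℝ) (hC : 0 < C) (hr : 0 < r)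
    (hc0 : ∀ i : Fin n → ℕ, ‖c0 i‖ ≤ C * r ^ (∑ k, q ^ (i k))) :
    ∃ c : ℕ → (Fin n → ℕ) → L,
      (∀ i, c 0 i = c0 i) ∧
      (∀ (m : ℕ) (i : Fin n → ℕ), (∀ k, m ≤ i k) →
        (MvPolynomial.eval (fun k => br q x (i k)) Q) ^ q * c (m + 1) (fun k => i k + 1)
          = -((MvPolynomial.eval (fun k => br q x (i k)) P) ^ q) * (c m i) ^ q) ∧
      (∀ c' : ℕ → (Fin n → ℕ) → L,
        (∀ i, c' 0 i = c0 i) →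
        (∀ (m : ℕ) (i : Fin n → ℕ), (∀ k, m ≤ i k) →
          (MvPolynomial.eval (fun k => br q x (i k)) Q) ^ q * c' (m + 1) (fun k => i k + 1)
            = -((MvPolynomial.eval (fun k => br q x (i k)) P) ^ q) * (c' m i) ^ q) →
        ∀ (m : ℕ) (i : Fin n → ℕ), (∀ k, m ≤ i k) → c' m i = c m i) ∧
      (∃ C₂ : ℝ, 0 < C₂ ∧ ∀ (m : ℕ) (i : Fin n → ℕ), (∀ k, m ≤ i k) →
        ‖c m i‖ ≤ C₂ ^ q ^ m * r ^ (∑ k, q ^ (i k))) := by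
  have hq2 : 2 ≤ q := by
    subst hq
    calc 2 ≤ p := hp.two_le
      _ ≤ p ^ v := Nat.le_self_pow (by omega) p
  have hq1R : (1:ℝ) ≤ (q:ℝ) := by exact_mod_cast le_trans (by norm_num) hq2
  have hxle : ‖x‖ ≤ 1 := by rw [hx]; exact inv_le_one_of_one_le₀ hq1R
  have hbr : ∀ j : ℕ, ‖br q x j‖ ≤ 1 := by
    intro j
    have h1 : ‖x ^ q ^ j‖ ≤ 1 := by
      rw [norm_pow]; exact pow_le_one₀ (norm_nonneg _) hxle
    calc ‖br q x j‖ = ‖x ^ q ^ j + -x‖ := by rw [br, sub_eq_add_neg]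
      _ ≤ max ‖x ^ q ^ j‖ ‖-x‖ := hna _ _
      _ ≤ 1 := max_le h1 (by rwa [norm_neg])
  set A : ℝ := (∑ s ∈ P.support, ‖P.coeff s‖) + 1 with hAdef
  have hA0 : 0 < A :=
    add_pos_of_nonneg_of_pos (Finset.sum_nonneg fun s _ => norm_nonneg _) one_pos
  have hPA : ∀ i : Fin n → ℕ, ‖MvPolynomial.eval (fun k => br q x (i k)) P‖ ≤ A := by
    intro i
    refine le_trans (eval_norm_le P _ (fun k => hbr _)) ?_
    rw [hAdef]; linarith
  have hQne : ∀ i : Fin n → ℕ, (MvPolynomial.eval (fun k => br q x (i k)) Q) ≠ 0 := by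
    intro i h
    have := hQ i
    rw [h, norm_zero] at this
    linarith
  refine ⟨cc q x P Q c0, fun i => rfl, ?_, ?_, ?_⟩
  · -- recurrence
    intro m i hmi
    rw [cc_succ_shift, mul_comm, div_mul_cancel₀]
    exact pow_ne_zero _ (hQne i)
  · -- uniqueness
    intro c' h0 hrec m
    induction m with
    | zero => intro i _; exact h0 i
    | succ m ih =>
      intro i hi
      set j : Fin n → ℕ := fun k => i k - 1 with hj
      have hji : (fun k => j k + 1) = i := by
        funext k; have := hi k; simp only [hj]; omega
      have hjm : ∀ k, m ≤ j k := by
        intro k; have := hi k; simp only [hj]; omega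
      have h1 := hrec m j hjm
      rw [ih j hjm] at h1
      have h2 : (MvPolynomial.eval (fun k => br q x (j k)) Q) ^ q
            * cc q x P Q c0 (m+1) (fun k => j k + 1)
          = -((MvPolynomial.eval (fun k => br q x (j k)) P) ^ q)
            * (cc q x P Q c0 m j) ^ q := by
        rw [cc_succ_shift, mul_comm, div_mul_cancel₀]
        exact pow_ne_zero _ (hQne j)
      have h3 := h1.trans h2.symm
      have h4 := mul_left_cancel₀ (pow_ne_zero q (hQne j)) h3
      rwa [hji] at h4
  · -- bound
    set T : ℝ := max 1 (A / μ) with hT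
    have hT1 : (1:ℝ) ≤ T := le_max_left _ _
    have hT0 : (0:ℝ) < T := lt_of_lt_of_le one_pos hT1
    set C₀ : ℝ := max 1 C with hC₀
    have hC₀1 : (1:ℝ) ≤ C₀ := le_max_left _ _
    have hC₀0 : (0:ℝ) < C₀ := lt_of_lt_of_le one_pos hC₀1
    have key : ∀ m (i : Fin n → ℕ), (∀ k, m ≤ i k) →
        ‖cc q x P Q c0 m i‖ * T ^ 2
          ≤ T ^ (2 * q ^ m) * C₀ ^ (q ^ m) * r ^ (∑ k, q ^ (i k)) := by
      intro m
      induction m with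
      | zero =>
        intro i _
        have h1 : ‖c0 i‖ ≤ C₀ * r ^ (∑ k, q ^ (i k)) :=
          (hc0 i).trans (mul_le_mul_of_nonneg_right (le_max_right 1 C)
            (pow_nonneg hr.le _))
        calc ‖cc q x P Q c0 0 i‖ * T ^ 2 = ‖c0 i‖ * T ^ 2 := rfl
          _ ≤ (C₀ * r ^ (∑ k, q ^ (i k))) * T ^ 2 :=
              mul_le_mul_of_nonneg_right h1 (by positivity)
          _ = T ^ (2 * q ^ 0) * C₀ ^ (q ^ 0) * r ^ (∑ k, q ^ (i k)) := by
              simp [pow_zero, pow_one]; ring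
      | succ m ih =>
        intro i hi
        set j : Fin n → ℕ := fun k => i k - 1 with hj
        have hji : (fun k => j k + 1) = i := by
          funext k; have := hi k; simp only [hj]; omega
        have hjm : ∀ k, m ≤ j k := by
          intro k; have := hi k; simp only [hj]; omega
        set Sj : ℕ := ∑ k, q ^ (j k) with hSj
        have hS2 : ∑ k, q ^ (i k) = Sj * q := by
          rw [hSj, Finset.sum_mul, ← hji]
          exact Finset.sum_congr rfl fun k _ => (pow_succ q (j k))
        set B : ℝ := T ^ (2 * q ^ m) * C₀ ^ (q ^ m) * r ^ Sj with hB
        have hB0 : (0:ℝ) < B := by positivity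
        have hcmj : ‖cc q x P Q c0 m j‖ ≤ B / T ^ 2 := by
          rw [le_div_iff₀ (by positivity)]
          exact ih j hjm
        have hrw : cc q x P Q c0 (m+1) i
            = -(MvPolynomial.eval (fun k => br q x (j k)) P) ^ q
              * (cc q x P Q c0 m j) ^ q
              / (MvPolynomial.eval (fun k => br q x (j k)) Q) ^ q := by
          rw [← hji, cc_succ_shift]
        have step1 : ‖cc q x P Q c0 (m+1) i‖ * T ^ 2
            ≤ A ^ q * (B / T ^ 2) ^ q / μ ^ q * T ^ 2 := by
          rw [hrw, norm_div, norm_mul, norm_neg, norm_pow, norm_pow, norm_pow]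
          gcongr <;> first
            | exact hPA j
            | exact hcmj
            | exact hQ j
            | exact norm_nonneg _
            | positivity
        have step2 : A ^ q * (B / T ^ 2) ^ q / μ ^ q * T ^ 2 ≤ B ^ q := by
          have e1 : A ^ q * (B / T ^ 2) ^ q / μ ^ q * T ^ 2
              = (A / μ) ^ q * T ^ 2 / (T ^ 2) ^ q * B ^ q := by
            rw [div_pow, div_pow]
            ring
          rw [e1]
          have h2 : (A / μ) ^ q * T ^ 2 / (T ^ 2) ^ q ≤ 1 := by
            rw [div_le_one (by positivity)]
            calc (A / μ) ^ q * T ^ 2 ≤ T ^ q * T ^ 2 := by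
                  gcongr <;> first
                    | exact le_max_right 1 (A / μ)
                    | exact div_nonneg hA0.le hμ.le
                    | positivity
              _ = T ^ (q + 2) := (pow_add T q 2).symm
              _ ≤ T ^ (2 * q) := pow_le_pow_right₀ hT1 (by omega)
              _ = (T ^ 2) ^ q := by rw [← pow_mul]
          calc (A / μ) ^ q * T ^ 2 / (T ^ 2) ^ q * B ^ q ≤ 1 * B ^ q :=
              mul_le_mul_of_nonneg_right h2 (by positivity)
            _ = B ^ q := one_mul _
        have e2 : B ^ q = T ^ (2 * q ^ (m+1)) * C₀ ^ (q ^ (m+1)) * r ^ (∑ k, q ^ (i k)) := by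
          rw [hB, mul_pow, mul_pow, ← pow_mul, ← pow_mul, ← pow_mul, hS2, pow_succ]
          ring_nf
        calc ‖cc q x P Q c0 (m+1) i‖ * T ^ 2 ≤ A ^ q * (B / T ^ 2) ^ q / μ ^ q * T ^ 2 := step1
          _ ≤ B ^ q := step2
          _ = _ := e2
    refine ⟨T ^ 2 * C₀, by positivity, ?_⟩
    intro m i hi
    have h1 := key m i hi
    have hT2 : (1:ℝ) ≤ T ^ 2 := by nlinarith
    have h2 : ‖cc q x P Q c0 m i‖ ≤ ‖cc q x P Q c0 m i‖ * T ^ 2 := by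
      nth_rewrite 1 [← mul_one ‖cc q x P Q c0 m i‖]
      exact mul_le_mul_of_nonneg_left hT2 (norm_nonneg _)
    calc ‖cc q x P Q c0 m i‖ ≤ T ^ (2 * q ^ m) * C₀ ^ (q ^ m) * r ^ (∑ k, q ^ (i k)) :=
        h2.trans h1
      _ = (T ^ 2 * C₀) ^ q ^ m * r ^ (∑ k, q ^ (i k)) := by
        rw [mul_pow, ← pow_mul]
end

section
/- Assume L is complete. Let n ≥ 1, let P, Q ∈ L[t_1,…,t_n] with ‖Q([i_1],…,[i_n])‖ ≥ μ > 0 for all i_1,…,i_n ∈ ℕ, let c⁰ : ℕ^n → L satisfy ‖c⁰(i)‖ ≤ C·r^{q^{i_1}+⋯+q^{i_n}} (C, r > 0), and let c(m; i_1,…,i_n) be the unique family with c(0;·) = c⁰ satisfying Q([i_1],…,[i_n])^q·c(m+1; i_1+1,…,i_n+1) = −P([i_1],…,[i_n])^q·c(m; i_1,…,i_n)^q. Then there exists ρ > 0 such that for all z, s_1,…,s_n ∈ L with ‖z‖ ≤ ρ and ‖s_k‖ ≤ ρ, the family (c(m; i_1,…,i_n)·s_1^{q^{i_1}}⋯s_n^{q^{i_n}}·z^{q^m}·D_m^{−1}),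 indexed by i_1,…,i_n ∈ ℕ and 0 ≤ m ≤ min(i_1,…,i_n), is summable in L; thus the series defining the solution of the Cauchy problem converges on a neighborhood of the origin. -/
/-- The series defining the solution of the Cauchy problem converges
(is summable) on a neighbourhood of the origin. -/
theorem stmt14 {p v q : ℕ} (hp : p.Prime) (hv : 0 < v) (hq : q = p ^ v)
    {L : Type*} [NormedField L] [CharP L p] [CompleteSpace L]
    (hna : ∀ a b : L, ‖a + b‖ ≤ max ‖a‖ ‖b‖)
    (x : L) (hx : ‖x‖ = (q : ℝ)⁻¹)
    (n : ℕ) (hn : 1 ≤ n) (P Q : MvPolynomial (Fin n) L)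
    (μ : ℝ) (hμ : 0 < μ)
    (hQ : ∀ i : Fin n → ℕ, μ ≤ ‖MvPolynomial.eval (fun k => br q x (i k)) Q‖)
    (c0 : (Fin n → ℕ) → L) (C r : ℝ) (hC : 0 < C) (hr : 0 < r)
    (hc0 : ∀ i : Fin n → ℕ, ‖c0 i‖ ≤ C * r ^ (∑ k, q ^ (i k)))
    (c : ℕ → (Fin n → ℕ) → L)
    (hcinit : ∀ i, c 0 i = c0 i)
    (hcrec : ∀ (m : ℕ) (i : Fin n → ℕ), (∀ k, m ≤ i k) →
      (MvPolynomial.eval (fun k => br q x (i k)) Q) ^ q * c (m + 1) (fun k => i k + 1)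
        = -((MvPolynomial.eval (fun k => br q x (i k)) P) ^ q) * (c m i) ^ q) :
    ∃ ρ : ℝ, 0 < ρ ∧ ∀ z : L, ‖z‖ ≤ ρ → ∀ s : Fin n → L, (∀ k, ‖s k‖ ≤ ρ) →
      Summable (fun mi : {pr : ℕ × (Fin n → ℕ) // ∀ k, pr.1 ≤ pr.2 k} =>
        c mi.1.1 mi.1.2 * (∏ k, s k ^ q ^ (mi.1.2 k)) * z ^ q ^ mi.1.1
          * (DD q x mi.1.1)⁻¹) := by
  haveI : IsUltrametricDist L :=
    IsUltrametricDist.isUltrametricDist_of_forall_norm_add_le_max_norm hna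
  -- basic facts about q
  have hq2 : 2 ≤ q := hq ▸ (Nat.one_lt_pow hv.ne' hp.one_lt)
  have hqR : (2 : ℝ) ≤ (q : ℝ) := by exact_mod_cast hq2
  have hq1 : (1 : ℝ) < (q : ℝ) := by linarith
  have hq0R : (0 : ℝ) < (q : ℝ) := by linarith
  have hxle1 : ‖x‖ ≤ 1 := by
    rw [hx]; exact inv_le_one_of_one_le₀ hq1.le
  -- norms of brackets
  have hbr1 : ∀ i : ℕ, ‖br q x i‖ ≤ 1 := by
    intro i
    rw [br, sub_eq_add_neg]
    refine (hna _ _).trans ?_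
    rw [norm_neg, norm_pow]
    exact max_le (pow_le_one₀ (norm_nonneg x) hxle1) hxle1
  have hbr_eq : ∀ i : ℕ, 1 ≤ i → ‖br q x i‖ = (q : ℝ)⁻¹ := by
    intro i hi
    have h1qi : 1 < q ^ i := Nat.one_lt_pow (by omega) hq2
    have hlt : ‖x ^ q ^ i‖ < ‖x‖ := by
      rw [norm_pow, hx]
      have h := pow_lt_pow_right_of_lt_one₀ (a := (q : ℝ)⁻¹) (by positivity)
        (inv_lt_one_of_one_lt₀ hq1) (show 1 < q ^ i from h1qi)
      simpa using h
    have hne : ‖x ^ q ^ i‖ ≠ ‖-x‖ := by rw [norm_neg]; exact hlt.ne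
    rw [br, sub_eq_add_neg, IsUltrametricDist.norm_add_eq_max_of_norm_ne_norm hne,
      norm_neg, max_eq_right hlt.le, hx]
  -- bound on evaluations of P
  set M : ℝ := (∑ d ∈ P.support, ‖MvPolynomial.coeff d P‖) + 1 with hM_def
  have hM1 : 1 ≤ M := by
    have : 0 ≤ ∑ d ∈ P.support, ‖MvPolynomial.coeff d P‖ :=
      Finset.sum_nonneg fun _ _ => norm_nonneg _
    simp only [hM_def]; linarith
  have hPb : ∀ i : Fin n → ℕ, ‖MvPolynomial.eval (fun k => br q x (i k)) P‖ ≤ M := by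
    intro i
    rw [MvPolynomial.eval_eq]
    refine (norm_sum_le _ _).trans ?_
    have h1 : ∑ d ∈ P.support, ‖MvPolynomial.coeff d P * ∏ k ∈ d.support, br q x (i k) ^ d k‖
        ≤ ∑ d ∈ P.support, ‖MvPolynomial.coeff d P‖ := by
      refine Finset.sum_le_sum fun d _ => ?_
      rw [norm_mul]
      refine mul_le_of_le_one_right (norm_nonneg _) ?_
      rw [norm_prod]
      refine Finset.prod_le_one (fun k _ => by positivity) (fun k _ => ?_)
      rw [norm_pow]
      exact pow_le_one₀ (norm_nonneg _) (hbr1 _)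
    refine h1.trans ?_
    simp only [hM_def]; linarith
  -- constants
  set μ' : ℝ := min μ 1 with hμ'_def
  have hμ'0 : 0 < μ' := lt_min hμ one_pos
  have hμ'1 : μ' ≤ 1 := min_le_right _ _
  have hQb : ∀ i : Fin n → ℕ, μ' ≤ ‖MvPolynomial.eval (fun k => br q x (i k)) Q‖ :=
    fun i => (min_le_left _ _).trans (hQ i)
  set B : ℝ := M / μ' with hB_def
  have hB1 : 1 ≤ B := (one_le_div hμ'0).mpr (hμ'1.trans hM1)
  have hB0 : 0 < B := lt_of_lt_of_le one_pos hB1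
  set C' : ℝ := max C 1 with hC'_def
  have hC'1 : 1 ≤ C' := le_max_right _ _
  set E : ℝ := C' * B ^ 2 with hE_def
  have hE1 : 1 ≤ E := one_le_mul_of_one_le_of_one_le hC'1 (one_le_pow₀ hB1)
  have hE0 : 0 < E := lt_of_lt_of_le one_pos hE1
  -- the main bound on the coefficients c
  have hc : ∀ m : ℕ, ∀ i : Fin n → ℕ, (∀ k, m ≤ i k) →
      ‖c m i‖ * B ^ 2 ≤ E ^ q ^ m * r ^ (∑ k, q ^ (i k)) := by
    intro m
    induction m with
    | zero =>
      intro i _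
      rw [hcinit]
      have h1 : ‖c0 i‖ * B ^ 2 ≤ (C * r ^ (∑ k, q ^ (i k))) * B ^ 2 := by
        exact mul_le_mul_of_nonneg_right (hc0 i) (by positivity)
      refine h1.trans ?_
      have h2 : C ≤ C' := le_max_left _ _
      have h3 : C * r ^ (∑ k, q ^ (i k)) * B ^ 2 ≤ C' * B ^ 2 * r ^ (∑ k, q ^ (i k)) := by
        have : C * r ^ (∑ k, q ^ (i k)) * B ^ 2 = (C * B ^ 2) * r ^ (∑ k, q ^ (i k)) := by ring
        rw [this]
        exact mul_le_mul_of_nonneg_right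
          (mul_le_mul_of_nonneg_right h2 (by positivity)) (by positivity)
      refine h3.trans ?_
      simp [hE_def, pow_zero]
    | succ m ih =>
      intro i hi
      set i' : Fin n → ℕ := fun k => i k - 1 with hi'_def
      have hik1 : ∀ k, 1 ≤ i k := fun k => le_trans (by omega) (hi k)
      have hii : (fun k => i' k + 1) = i := by
        funext k; have h := hik1 k; simp only [hi'_def]; omega
      have hi'm : ∀ k, m ≤ i' k := by
        intro k; have := hi k; simp only [hi'_def]; omega
      have hrec := hcrec m i' hi'm
      rw [hii] at hrec
      set Pv := MvPolynomial.eval (fun k => br q x (i' k)) P with hPv_def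
      set Qv := MvPolynomial.eval (fun k => br q x (i' k)) Q with hQv_def
      have hnorm : ‖Qv‖ ^ q * ‖c (m + 1) i‖ = ‖Pv‖ ^ q * ‖c m i'‖ ^ q := by
        have := congrArg norm hrec
        simpa [norm_mul, norm_pow, norm_neg] using this
      set Y : ℝ := ‖c m i'‖ with hY_def
      have hY0 : 0 ≤ Y := norm_nonneg _
      have h2 : ‖c (m + 1) i‖ ≤ B ^ q * Y ^ q := by
        have hMeq : M = B * μ' := (div_mul_cancel₀ M hμ'0.ne').symm
        have h1 : ‖c (m + 1) i‖ * μ' ^ q ≤ (B ^ q * Y ^ q) * μ' ^ q := by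
          calc ‖c (m + 1) i‖ * μ' ^ q
              ≤ ‖c (m + 1) i‖ * ‖Qv‖ ^ q :=
                mul_le_mul_of_nonneg_left
                  (pow_le_pow_left₀ hμ'0.le (hQb i') q) (norm_nonneg _)
            _ = ‖Pv‖ ^ q * Y ^ q := by rw [mul_comm]; exact hnorm
            _ ≤ M ^ q * Y ^ q :=
                mul_le_mul_of_nonneg_right
                  (pow_le_pow_left₀ (norm_nonneg _) (hPb i') q) (by positivity)
            _ = (B ^ q * Y ^ q) * μ' ^ q := by rw [hMeq, mul_pow]; ring
        exact le_of_mul_le_mul_right h1 (pow_pos hμ'0 q)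
      set A : ℝ := E ^ q ^ m * r ^ (∑ k, q ^ (i' k)) with hA_def
      have h3 : Y * B ^ 2 ≤ A := ih i' hi'm
      have hA0 : 0 ≤ A := by positivity
      have hsum : (∑ k, q ^ (i' k)) * q = ∑ k, q ^ (i k) := by
        rw [Finset.sum_mul]
        refine Finset.sum_congr rfl fun k _ => ?_
        have : i k = i' k + 1 := by have h := hik1 k; simp only [hi'_def]; omega
        rw [this, pow_succ]
      calc ‖c (m + 1) i‖ * B ^ 2
          ≤ (B ^ q * Y ^ q) * B ^ 2 := mul_le_mul_of_nonneg_right h2 (by positivity)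
        _ = Y ^ q * B ^ (q + 2) := by rw [pow_add]; ring
        _ ≤ Y ^ q * B ^ (2 * q) := by
            exact mul_le_mul_of_nonneg_left
              (pow_le_pow_right₀ hB1 (by omega)) (by positivity)
        _ = (Y * B ^ 2) ^ q := by rw [mul_pow, ← pow_mul, mul_comm 2 q]
        _ ≤ A ^ q := pow_le_pow_left₀ (by positivity) h3 q
        _ = E ^ q ^ (m + 1) * r ^ (∑ k, q ^ (i k)) := by
            rw [hA_def, mul_pow, ← pow_mul, ← pow_mul, pow_succ, hsum]
  -- bounds on the Carlitz factorials
  have hD : ∀ m : ℕ, (q : ℝ) ≤ ‖DD q x m‖ * (q : ℝ) ^ q ^ m := by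
    intro m
    induction m with
    | zero =>
      show (q : ℝ) ≤ ‖(1 : L)‖ * (q : ℝ) ^ q ^ 0
      rw [norm_one, one_mul, pow_zero, pow_one]
    | succ m ih =>
      have h1 : ‖DD q x (m + 1)‖ = (q : ℝ)⁻¹ * ‖DD q x m‖ ^ q := by
        show ‖br q x (m + 1) * (DD q x m) ^ q‖ = _
        rw [norm_mul, norm_pow, hbr_eq (m + 1) (by omega)]
      calc (q : ℝ) = (q : ℝ)⁻¹ * (q : ℝ) ^ 2 := by
            field_simp
        _ ≤ (q : ℝ)⁻¹ * (q : ℝ) ^ q :=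
            mul_le_mul_of_nonneg_left (pow_le_pow_right₀ hq1.le hq2) (by positivity)
        _ ≤ (q : ℝ)⁻¹ * (‖DD q x m‖ * (q : ℝ) ^ q ^ m) ^ q :=
            mul_le_mul_of_nonneg_left (pow_le_pow_left₀ hq0R.le ih q) (by positivity)
        _ = ‖DD q x (m + 1)‖ * (q : ℝ) ^ q ^ (m + 1) := by
            rw [h1, mul_pow, ← pow_mul, pow_succ]; ring
  have hDpos : ∀ m : ℕ, 0 < ‖DD q x m‖ := by
    intro m
    by_contra hle
    push_neg at hle
    have h0 : ‖DD q x m‖ = 0 := le_antisymm hle (norm_nonneg _)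
    have := hD m
    rw [h0, zero_mul] at this
    linarith
  have hDinv : ∀ m : ℕ, ‖(DD q x m)⁻¹‖ ≤ (q : ℝ) ^ q ^ m := by
    intro m
    rw [norm_inv]
    have h1 : (1 : ℝ) ≤ ‖DD q x m‖ * (q : ℝ) ^ q ^ m := le_trans (by linarith) (hD m)
    calc ‖DD q x m‖⁻¹ = ‖DD q x m‖⁻¹ * 1 := (mul_one _).symm
      _ ≤ ‖DD q x m‖⁻¹ * (‖DD q x m‖ * (q : ℝ) ^ q ^ m) :=
          mul_le_mul_of_nonneg_left h1 (by positivity)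
      _ = (q : ℝ) ^ q ^ m := by
          rw [← mul_assoc, inv_mul_cancel₀ (hDpos m).ne', one_mul]
  -- choose ρ
  refine ⟨min (1 / (2 * E * q)) (1 / (2 * r)), lt_min (by positivity) (by positivity),
    fun z hz s hs => ?_⟩
  set ρ : ℝ := min (1 / (2 * E * q)) (1 / (2 * r)) with hρ_def
  have hρ0 : 0 < ρ := lt_min (by positivity) (by positivity)
  have hρE : E * ρ * (q : ℝ) ≤ 1 / 2 := by
    have h1 : ρ ≤ 1 / (2 * E * q) := min_le_left _ _
    have h2 : 0 < 2 * E * (q : ℝ) := by positivity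
    have haux2 : ∀ a b : ℝ, 0 < a → 0 < b → a * (1 / (2 * a * b)) * b = 1 / 2 := by
      intro a b ha hb; field_simp
    calc E * ρ * (q : ℝ) ≤ E * (1 / (2 * E * q)) * q :=
          mul_le_mul_of_nonneg_right (mul_le_mul_of_nonneg_left h1 hE0.le) hq0R.le
      _ = 1 / 2 := haux2 E q hE0 hq0R
  have hρr : r * ρ ≤ 1 / 2 := by
    have h1 : ρ ≤ 1 / (2 * r) := min_le_right _ _
    have haux3 : ∀ a : ℝ, 0 < a → a * (1 / (2 * a)) = 1 / 2 := by
      intro a ha; field_simp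
    calc r * ρ ≤ r * (1 / (2 * r)) := mul_le_mul_of_nonneg_left h1 hr.le
      _ = 1 / 2 := haux3 r hr
  -- summability via the nonarchimedean criterion
  apply NonarchimedeanAddGroup.summable_of_tendsto_cofinite_zero
  apply squeeze_zero_norm
    (a := fun mi : {pr : ℕ × (Fin n → ℕ) // ∀ k, pr.1 ≤ pr.2 k} =>
      (1 / 2 : ℝ) ^ (mi.1.1 + ∑ k, mi.1.2 k))
  · rintro ⟨⟨m, i⟩, hm⟩
    simp only
    have hcb : ‖c m i‖ ≤ E ^ q ^ m * r ^ (∑ k, q ^ (i k)) := by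
      refine le_trans ?_ (hc m i hm)
      exact le_mul_of_one_le_right (norm_nonneg _) (one_le_pow₀ hB1)
    have hzb : ‖z ^ q ^ m‖ ≤ ρ ^ q ^ m := by
      rw [norm_pow]; exact pow_le_pow_left₀ (norm_nonneg _) hz _
    have hsb : ‖∏ k, s k ^ q ^ (i k)‖ ≤ ρ ^ (∑ k, q ^ (i k)) := by
      rw [norm_prod, ← Finset.prod_pow_eq_pow_sum]
      refine Finset.prod_le_prod (fun k _ => by positivity) (fun k _ => ?_)
      rw [norm_pow]
      exact pow_le_pow_left₀ (norm_nonneg _) (hs k) _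
    have step1 : ‖c m i * (∏ k, s k ^ q ^ (i k)) * z ^ q ^ m * (DD q x m)⁻¹‖
        ≤ (E ^ q ^ m * r ^ (∑ k, q ^ (i k))) * ρ ^ (∑ k, q ^ (i k)) * ρ ^ q ^ m
          * (q : ℝ) ^ q ^ m := by
      rw [norm_mul, norm_mul, norm_mul]
      exact mul_le_mul (mul_le_mul (mul_le_mul hcb hsb (norm_nonneg _) (by positivity))
        hzb (norm_nonneg _) (by positivity)) (hDinv m) (norm_nonneg _) (by positivity)
    refine step1.trans ?_
    have haux : ∀ (a b cc d : ℝ) (N K : ℕ),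
        (a ^ N * b ^ K) * cc ^ K * cc ^ N * d ^ N = (a * cc * d) ^ N * (b * cc) ^ K := by
      intro a b cc d N K
      rw [mul_pow (a * cc) d, mul_pow a cc, mul_pow b cc]; ring
    rw [haux E r ρ (q : ℝ) (q ^ m) (∑ k, q ^ (i k))]
    have hb1 : (E * ρ * (q : ℝ)) ^ q ^ m ≤ (1 / 2 : ℝ) ^ q ^ m :=
      pow_le_pow_left₀ (by positivity) hρE _
    have hb2 : (r * ρ) ^ (∑ k, q ^ (i k)) ≤ (1 / 2 : ℝ) ^ (∑ k, q ^ (i k)) :=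
      pow_le_pow_left₀ (by positivity) hρr _
    calc (E * ρ * (q : ℝ)) ^ q ^ m * (r * ρ) ^ (∑ k, q ^ (i k))
        ≤ (1 / 2 : ℝ) ^ q ^ m * (1 / 2 : ℝ) ^ (∑ k, q ^ (i k)) :=
          mul_le_mul hb1 hb2 (by positivity) (by positivity)
      _ = (1 / 2 : ℝ) ^ (q ^ m + ∑ k, q ^ (i k)) := (pow_add _ _ _).symm
      _ ≤ (1 / 2 : ℝ) ^ (m + ∑ k, i k) := by
          refine pow_le_pow_of_le_one (by norm_num) (by norm_num) ?_
          have h1 : m ≤ q ^ m := Nat.le_of_lt (Nat.lt_pow_self (by omega))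
          have h2 : ∑ k, i k ≤ ∑ k, q ^ (i k) :=
            Finset.sum_le_sum fun k _ => Nat.le_of_lt (Nat.lt_pow_self (by omega))
          omega
  · -- the bounding sequence tends to zero
    have hN : Filter.Tendsto
        (fun mi : {pr : ℕ × (Fin n → ℕ) // ∀ k, pr.1 ≤ pr.2 k} => mi.1.1 + ∑ k, mi.1.2 k)
        Filter.cofinite Filter.atTop := by
      rw [Filter.tendsto_atTop]
      intro b
      rw [Filter.eventually_cofinite]
      have hS : Set.Finite {pr : ℕ × (Fin n → ℕ) | pr.1 ≤ b ∧ ∀ k, pr.2 k ≤ b} := by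
        refine Set.Finite.subset (Set.Finite.prod (Set.finite_Iic b)
          (Set.Finite.pi fun _ : Fin n => Set.finite_Iic b)) ?_
        rintro ⟨m, i⟩ ⟨h1, h2⟩
        exact ⟨h1, fun k _ => h2 k⟩
      refine Set.Finite.subset (Set.Finite.preimage
        (Set.injOn_of_injective Subtype.val_injective) hS) ?_
      intro mi hlt
      simp only [Set.mem_setOf_eq, not_le] at hlt
      simp only [Set.mem_preimage, Set.mem_setOf_eq]
      refine ⟨by omega, fun k => ?_⟩
      have h : mi.1.2 k ≤ ∑ j, mi.1.2 j :=
        Finset.single_le_sum (fun j _ => Nat.zero_le _) (Finset.mem_univ k)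
      omega
    exact (tendsto_pow_atTop_nhds_zero_of_lt_one (by norm_num) (by norm_num)).comp hN
end

section
/- Let b ∈ L be admissible, i.e. b ≠ −x and b ≠ [ν] for every ν ∈ ℕ. Then there exists μ₁ with 0 < μ₁ ≤ 1 such that ‖b − [ν]‖ ≥ μ₁ for all ν ∈ ℕ, and consequently ‖⟨b⟩_ν‖ ≥ μ₁^{(q^{ν+1} − q)/(q − 1)} for all ν ∈ ℕ; in particular there are constants C' > 0 and ρ' > 0 with ‖⟨b⟩_ν‖ ≥ C'·(ρ')^{q^ν} for all ν. -/
lemma sum_rev (q ν : ℕ) :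
    ∑ k ∈ Finset.range ν, q ^ (ν - k) = ∑ k ∈ Finset.Icc 1 ν, q ^ k := by
  rw [← Finset.Ico_add_one_right_eq_Icc, Finset.sum_Ico_eq_sum_range]
  simp only [Nat.succ_sub_one, Nat.add_sub_cancel]
  rw [← Finset.sum_range_reflect (fun i => q ^ (1 + i)) ν]
  apply Finset.sum_congr rfl
  intro j hj
  simp only [Finset.mem_range] at hj
  congr 1
  omega

lemma geomSumIcc_le {q : ℕ} (hq2 : 2 ≤ q) (ν : ℕ) :
    ∑ k ∈ Finset.Icc 1 ν, q ^ k ≤ q ^ (ν + 1) := by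
  induction ν with
  | zero => simp
  | succ n ih =>
    rw [← Finset.Ico_add_one_right_eq_Icc, Finset.sum_Ico_succ_top (by omega), Finset.Ico_add_one_right_eq_Icc]
    calc (∑ k ∈ Finset.Icc 1 n, q ^ k) + q ^ (n + 1)
        ≤ q ^ (n + 1) + q ^ (n + 1) := by omega
      _ = 2 * q ^ (n + 1) := by ring
      _ ≤ q * q ^ (n + 1) := Nat.mul_le_mul_right _ hq2
      _ = q ^ (n + 2) := by ring

/-- For admissible $b$ (i.e. $b ≠ [ν]$ for $ν = 0,1,…,∞$) the values $‖b-[ν]‖$ are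
bounded below by some $0 < μ_1 ≤ 1$, whence
$‖⟨b⟩_ν‖ ≥ μ_1^{(q^{ν+1}-q)/(q-1)} = μ_1^{q+q^2+⋯+q^ν}$, so $‖⟨b⟩_ν‖ ≥ C'·ρ'^{q^ν}$. -/
theorem stmt15 {p v q : ℕ} (hp : p.Prime) (hv : 0 < v) (hq : q = p ^ v)
    {L : Type*} [NormedField L] [CharP L p]
    (hna : ∀ a b : L, ‖a + b‖ ≤ max ‖a‖ ‖b‖)
    (x : L) (hx : ‖x‖ = (q : ℝ)⁻¹)
    (b : L) (hbinf : b ≠ -x) (hbν : ∀ ν : ℕ, b ≠ br q x ν) :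
    ∃ μ₁ : ℝ, 0 < μ₁ ∧ μ₁ ≤ 1 ∧
      (∀ ν : ℕ, μ₁ ≤ ‖b - br q x ν‖) ∧
      (∀ ν : ℕ, μ₁ ^ (∑ k ∈ Finset.Icc 1 ν, q ^ k) ≤ ‖poch q x b ν‖) ∧
      (∃ C' ρ' : ℝ, 0 < C' ∧ 0 < ρ' ∧ ∀ ν : ℕ, C' * ρ' ^ q ^ ν ≤ ‖poch q x b ν‖) := by
  have hq2 : 2 ≤ q := by
    rw [hq]
    calc 2 ≤ p := hp.two_le
      _ = p ^ 1 := (pow_one p).symm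
      _ ≤ p ^ v := Nat.pow_le_pow_right hp.pos hv
  have hqR : (1 : ℝ) < (q : ℝ) := by exact_mod_cast (by omega : 1 < q)
  have hinv0 : (0 : ℝ) ≤ (q : ℝ)⁻¹ := by positivity
  have hinv1 : (q : ℝ)⁻¹ < 1 := by
    rw [inv_lt_one_iff₀]; right; exact hqR
  -- ε = ‖b + x‖ > 0
  have hbx : b + x ≠ 0 := fun h => hbinf (by linear_combination h)
  have hε : 0 < ‖b + x‖ := norm_pos_iff.mpr hbx
  obtain ⟨n, hn⟩ := exists_pow_lt_of_lt_one hε hinv1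
  -- each distance is positive
  have hpos : ∀ ν : ℕ, 0 < ‖b - br q x ν‖ := fun ν =>
    norm_pos_iff.mpr (sub_ne_zero.mpr (hbν ν))
  -- for ν ≥ n, ‖b - [ν]‖ ≥ ‖b + x‖
  have htail : ∀ ν : ℕ, n ≤ ν → ‖b + x‖ ≤ ‖b - br q x ν‖ := by
    intro ν hν
    have hxq : ‖x ^ q ^ ν‖ < ‖b + x‖ := by
      rw [norm_pow, hx]
      calc (q : ℝ)⁻¹ ^ q ^ ν ≤ (q : ℝ)⁻¹ ^ ν := by
            apply pow_le_pow_of_le_one hinv0 hinv1.le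
            exact le_of_lt (Nat.lt_pow_self (by omega : 1 < q) : ν < q ^ ν)
        _ ≤ (q : ℝ)⁻¹ ^ n := pow_le_pow_of_le_one hinv0 hinv1.le hν
        _ < ‖b + x‖ := hn
    have key : b + x = (b - br q x ν) + x ^ q ^ ν := by
      simp [br]; ring
    have := hna (b - br q x ν) (x ^ q ^ ν)
    rw [← key] at this
    rcases le_max_iff.mp this with h | h
    · exact h
    · exact absurd (lt_of_le_of_lt h hxq) (lt_irrefl _)
  -- μ₁
  set M : ℝ := (Finset.range (n + 1)).inf' (by simp) (fun ν => ‖b - br q x ν‖) with hM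
  set μ₁ : ℝ := min 1 (min ‖b + x‖ M) with hμ
  have hMpos : 0 < M := by
    rw [hM]
    exact (Finset.lt_inf'_iff _).mpr fun i _ => hpos i
  have hμpos : 0 < μ₁ := lt_min one_pos (lt_min hε hMpos)
  have hμ1 : μ₁ ≤ 1 := min_le_left _ _
  have hlb : ∀ ν : ℕ, μ₁ ≤ ‖b - br q x ν‖ := by
    intro ν
    rcases le_or_gt ν n with h | h
    · calc μ₁ ≤ M := le_trans (min_le_right _ _) (min_le_right _ _)
        _ ≤ ‖b - br q x ν‖ := Finset.inf'_le _ (by simp; omega)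
    · calc μ₁ ≤ ‖b + x‖ := le_trans (min_le_right _ _) (min_le_left _ _)
        _ ≤ ‖b - br q x ν‖ := htail ν h.le
  have hpoch : ∀ ν : ℕ, μ₁ ^ (∑ k ∈ Finset.Icc 1 ν, q ^ k) ≤ ‖poch q x b ν‖ := by
    intro ν
    rw [poch, norm_prod, ← sum_rev q ν, ← Finset.prod_pow_eq_pow_sum]
    apply Finset.prod_le_prod
    · intro i _; positivity
    · intro i _
      rw [norm_pow]
      apply pow_le_pow_left₀ hμpos.le
      rw [norm_sub_rev]
      exact hlb i
  refine ⟨μ₁, hμpos, hμ1, hlb, hpoch, 1, μ₁ ^ q, one_pos, by positivity, ?_⟩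
  intro ν
  rw [one_mul, ← pow_mul]
  calc μ₁ ^ (q * q ^ ν)
      ≤ μ₁ ^ (∑ k ∈ Finset.Icc 1 ν, q ^ k) := by
        apply pow_le_pow_of_le_one hμpos.le hμ1
        calc ∑ k ∈ Finset.Icc 1 ν, q ^ k ≤ q ^ (ν + 1) := geomSumIcc_le hq2 ν
          _ = q * q ^ ν := by ring
    _ ≤ ‖poch q x b ν‖ := hpoch ν
end

section
/- Let a_1,…,a_r ∈ L be arbitrary and let b_1,…,b_s ∈ L be admissible, i.e. b_j ≠ −x and b_j ≠ [ν] for all ν ∈ ℕ. Set h_m = (⟨a_1⟩_m⋯⟨a_r⟩_m)/(⟨b_1⟩_m⋯⟨b_s⟩_m·D_m). Then there exists ρ > 0 such that for every z ∈ L with ‖z‖ ≤ ρ one has ‖h_m·z^{q^m}‖ → 0 as m → ∞; if L is complete, the generalized hypergeometric series ₍r₎F₍s₎(a_1,…,a_r; b_1,…,b_s; z) = Σ_{m≥0} h_m z^{q^m} therefore converges, i.e. it has a positive radius of convergence. -/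
private lemma prod_le_single' {ι : Type*} (S : Finset ι) (f : ι → ℝ)
    (h0 : ∀ i ∈ S, 0 < f i) (h1 : ∀ i ∈ S, f i ≤ 1) {j : ι} (hj : j ∈ S) :
    ∏ i ∈ S, f i ≤ f j := by
  classical
  rw [← Finset.mul_prod_erase S f hj]
  have hP : ∏ i ∈ S.erase j, f i ≤ 1 :=
    Finset.prod_le_one (fun i hi => (h0 i (Finset.mem_of_mem_erase hi)).le)
      (fun i hi => h1 i (Finset.mem_of_mem_erase hi))
  calc f j * ∏ i ∈ S.erase j, f i ≤ f j * 1 :=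
        mul_le_mul_of_nonneg_left hP (h0 j hj).le
    _ = f j := mul_one _

private lemma sum_pow_aux {q : ℕ} (hq : 2 ≤ q) :
    ∀ m : ℕ, (∑ k ∈ Finset.range m, q ^ (m - k)) + 2 ≤ 2 * q ^ m
  | 0 => by simp
  | (m + 1) => by
    have IH := sum_pow_aux hq m
    have h1 : ∑ k ∈ Finset.range (m + 1), q ^ (m + 1 - k)
        = q * (∑ k ∈ Finset.range m, q ^ (m - k)) + q := by
      rw [Finset.sum_range_succ, Finset.mul_sum]
      congr 1
      · apply Finset.sum_congr rfl
        intro k hk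
        have hk' : k < m := Finset.mem_range.mp hk
        have : m + 1 - k = (m - k) + 1 := by omega
        rw [this, pow_succ]
        ring
      · simp
    rw [h1]
    have h2 : q * ((∑ k ∈ Finset.range m, q ^ (m - k)) + 2) ≤ q * (2 * q ^ m) :=
      Nat.mul_le_mul_left q IH
    have h3 : q * (2 * q ^ m) = 2 * q ^ (m + 1) := by ring
    nlinarith [h2]

/-- The generalized hypergeometric series with admissible parameters $b_j$ has a
positive radius of convergence. -/
theorem stmt16 {p v q : ℕ} (hp : p.Prime) (hv : 0 < v) (hq : q = p ^ v)
    {L : Type*} [NormedField L] [CharP L p]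
    (hna : ∀ a b : L, ‖a + b‖ ≤ max ‖a‖ ‖b‖)
    (x : L) (hx : ‖x‖ = (q : ℝ)⁻¹)
    (r s : ℕ) (a : Fin r → L) (b : Fin s → L)
    (hbinf : ∀ j, b j ≠ -x) (hbν : ∀ (j : Fin s) (ν : ℕ), b j ≠ br q x ν)
    (h : ℕ → L)
    (hh : ∀ m : ℕ, h m = (∏ i : Fin r, poch q x (a i) m)
        / ((∏ j : Fin s, poch q x (b j) m) * DD q x m)) :
    ∃ ρ : ℝ, 0 < ρ ∧ ∀ z : L, ‖z‖ ≤ ρ →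
      Filter.Tendsto (fun m : ℕ => ‖h m * z ^ q ^ m‖) Filter.atTop (nhds 0) ∧
      (∀ _ : CompleteSpace L, Summable fun m : ℕ => h m * z ^ q ^ m) := by
  -- Basic facts about q
  have hq2 : 2 ≤ q := by
    subst hq
    calc 2 ≤ p := hp.two_le
      _ ≤ p ^ v := Nat.le_self_pow hv.ne' p
  have hq1R : (1:ℝ) < (q:ℝ) := by exact_mod_cast lt_of_lt_of_le one_lt_two (by exact_mod_cast hq2)
  have hqi0 : (0:ℝ) < (q:ℝ)⁻¹ := inv_pos.mpr (lt_trans one_pos hq1R)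
  have hqilt : (q:ℝ)⁻¹ < 1 := inv_lt_one_of_one_lt₀ hq1R
  -- nonarchimedean equality
  have hne : ∀ u w : L, ‖u‖ < ‖w‖ → ‖u + w‖ = ‖w‖ := by
    intro u w hlt
    refine le_antisymm ((hna u w).trans_eq (max_eq_right hlt.le)) ?_
    have h2 : ‖w‖ ≤ max ‖u + w‖ ‖u‖ := by
      have := hna (u + w) (-u)
      simpa using this
    rcases le_max_iff.mp h2 with h3 | h3
    · exact h3
    · exact absurd (lt_of_le_of_lt h3 hlt) (lt_irrefl _)
  -- norms of brackets
  have hbr_le : ∀ k, ‖br q x k‖ ≤ 1 := by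
    intro k
    have : ‖x ^ q ^ k + (-x)‖ ≤ max ‖x ^ q ^ k‖ ‖-x‖ := hna _ _
    rw [show br q x k = x ^ q ^ k + (-x) by rw [br]; ring]
    refine this.trans (max_le ?_ ?_)
    · rw [norm_pow, hx]; exact pow_le_one₀ hqi0.le hqilt.le
    · rw [norm_neg, hx]; exact hqilt.le
  have hbr_eq : ∀ k, 1 ≤ k → ‖br q x k‖ = (q:ℝ)⁻¹ := by
    intro k hk
    have h1 : ‖x ^ q ^ k‖ < ‖-x‖ := by
      rw [norm_pow, norm_neg, hx]
      calc ((q:ℝ)⁻¹) ^ q ^ k < ((q:ℝ)⁻¹) ^ 1 := by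
            apply pow_lt_pow_right_of_lt_one₀ hqi0 hqilt
            calc 1 < 2 := one_lt_two
              _ ≤ q := hq2
              _ = q ^ 1 := (pow_one q).symm
              _ ≤ q ^ k := Nat.pow_le_pow_right (by omega) hk
        _ = (q:ℝ)⁻¹ := pow_one _
    rw [show br q x k = x ^ q ^ k + (-x) by rw [br]; ring, hne _ _ h1, norm_neg, hx]
  -- upper bound constant for the numerator
  set C : ℝ := 1 + ∑ i : Fin r, ‖a i‖ with hCdef
  have hC1 : 1 ≤ C := le_add_of_nonneg_right (Finset.sum_nonneg fun i _ => norm_nonneg _)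
  have hnum_bd : ∀ (i : Fin r) k, ‖br q x k - a i‖ ≤ C := by
    intro i k
    have h1 : ‖br q x k + (-(a i))‖ ≤ max ‖br q x k‖ ‖-(a i)‖ := hna _ _
    rw [sub_eq_add_neg]
    refine h1.trans (max_le (le_trans (hbr_le k) hC1) ?_)
    rw [norm_neg]
    calc ‖a i‖ ≤ ∑ i : Fin r, ‖a i‖ :=
          Finset.single_le_sum (fun i _ => norm_nonneg (a i)) (Finset.mem_univ i)
      _ ≤ C := le_add_of_nonneg_left zero_le_one
  -- lower bound constants for the denominator
  have hbj : ∀ j : Fin s, ∃ c : ℝ, 0 < c ∧ c ≤ 1 ∧ ∀ k, c ≤ ‖br q x k - b j‖ := by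
    intro j
    have hw0 : (0:ℝ) < ‖x + b j‖ := by
      rw [norm_pos_iff]
      intro h0
      exact hbinf j (by linear_combination h0)
    have htend : Filter.Tendsto (fun k : ℕ => ((q:ℝ)⁻¹) ^ (q ^ k)) Filter.atTop (nhds 0) := by
      apply squeeze_zero (fun k => pow_nonneg hqi0.le _)
        (g := fun k : ℕ => ((q:ℝ)⁻¹) ^ k)
      · intro k
        exact pow_le_pow_of_le_one hqi0.le hqilt.le (Nat.lt_pow_self (by omega : 1 < q)).le
      · exact tendsto_pow_atTop_nhds_zero_of_lt_one hqi0.le hqilt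
    obtain ⟨N, hN⟩ := Filter.eventually_atTop.mp (htend.eventually (gt_mem_nhds hw0))
    set P : ℝ := ∏ k ∈ Finset.range N, min 1 ‖br q x k - b j‖ with hPdef
    have hfact_pos : ∀ k ∈ Finset.range N, (0:ℝ) < min 1 ‖br q x k - b j‖ := by
      intro k _
      refine lt_min one_pos ?_
      rw [norm_pos_iff]
      exact sub_ne_zero.mpr (hbν j k).symm
    have hfact_le1 : ∀ k ∈ Finset.range N, min 1 ‖br q x k - b j‖ ≤ 1 :=
      fun k _ => min_le_left _ _
    have hP0 : 0 < P := Finset.prod_pos hfact_pos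
    refine ⟨min 1 (min ‖x + b j‖ P), ?_, min_le_left _ _, ?_⟩
    · exact lt_min one_pos (lt_min hw0 hP0)
    · intro k
      by_cases hk : N ≤ k
      · have heq : ‖br q x k - b j‖ = ‖x + b j‖ := by
          have h1 : ‖x ^ q ^ k‖ < ‖-(x + b j)‖ := by
            rw [norm_pow, norm_neg, hx]
            exact hN k hk
          rw [show br q x k - b j = x ^ q ^ k + (-(x + b j)) by rw [br]; ring,
            hne _ _ h1, norm_neg]
        rw [heq]
        exact le_trans (min_le_right _ _) (min_le_left _ _)
      · push_neg at hk
        calc min 1 (min ‖x + b j‖ P) ≤ P := le_trans (min_le_right _ _) (min_le_right _ _)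
          _ ≤ min 1 ‖br q x k - b j‖ :=
              prod_le_single' _ _ hfact_pos hfact_le1 (Finset.mem_range.mpr hk)
          _ ≤ ‖br q x k - b j‖ := min_le_right _ _
  choose cf hcf0 hcf1 hcfk using hbj
  set c : ℝ := ∏ j : Fin s, cf j with hcdef
  have hc0 : 0 < c := Finset.prod_pos fun j _ => hcf0 j
  have hc1 : c ≤ 1 := Finset.prod_le_one (fun j _ => (hcf0 j).le) (fun j _ => hcf1 j)
  have hck : ∀ (j : Fin s) k, c ≤ ‖br q x k - b j‖ := by
    intro j k
    exact le_trans
      (prod_le_single' Finset.univ cf (fun i _ => hcf0 i) (fun i _ => hcf1 i)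
        (Finset.mem_univ j)) (hcfk j k)
  -- the exponent sum bound
  have hTm : ∀ m, (∑ k ∈ Finset.range m, q ^ (m - k)) ≤ 2 * q ^ m :=
    fun m => le_trans (Nat.le_add_right _ 2) (sum_pow_aux hq2 m)
  -- norm of poch as a product
  have hpoch_norm : ∀ (y : L) m,
      ‖poch q x y m‖ = ∏ k ∈ Finset.range m, ‖br q x k - y‖ ^ q ^ (m - k) := by
    intro y m
    rw [poch, norm_prod]
    exact Finset.prod_congr rfl fun k _ => norm_pow _ _
  -- upper bound for numerator pochs
  have hpochA : ∀ (i : Fin r) m, ‖poch q x (a i) m‖ ≤ C ^ (2 * q ^ m) := by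
    intro i m
    rw [hpoch_norm]
    calc ∏ k ∈ Finset.range m, ‖br q x k - a i‖ ^ q ^ (m - k)
        ≤ ∏ k ∈ Finset.range m, C ^ q ^ (m - k) :=
          Finset.prod_le_prod (fun k _ => pow_nonneg (norm_nonneg _) _)
            (fun k _ => pow_le_pow_left₀ (norm_nonneg _) (hnum_bd i k) _)
      _ = C ^ (∑ k ∈ Finset.range m, q ^ (m - k)) := Finset.prod_pow_eq_pow_sum _ _ _
      _ ≤ C ^ (2 * q ^ m) := pow_le_pow_right₀ hC1 (hTm m)
  -- lower bound for denominator pochs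
  have hpochB : ∀ (j : Fin s) m, c ^ (2 * q ^ m) ≤ ‖poch q x (b j) m‖ := by
    intro j m
    rw [hpoch_norm]
    calc c ^ (2 * q ^ m) ≤ c ^ (∑ k ∈ Finset.range m, q ^ (m - k)) :=
          pow_le_pow_of_le_one hc0.le hc1 (hTm m)
      _ = ∏ k ∈ Finset.range m, c ^ q ^ (m - k) := (Finset.prod_pow_eq_pow_sum _ _ _).symm
      _ ≤ ∏ k ∈ Finset.range m, ‖br q x k - b j‖ ^ q ^ (m - k) :=
          Finset.prod_le_prod (fun k _ => pow_nonneg hc0.le _)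
            (fun k _ => pow_le_pow_left₀ hc0.le (hck j k) _)
  -- lower bound for DD
  have hDD' : ∀ m, ((q:ℝ)⁻¹) ^ (2 * q ^ m) ≤ (q:ℝ)⁻¹ * ‖DD q x m‖ := by
    intro m
    induction m with
    | zero =>
      show ((q:ℝ)⁻¹) ^ (2 * q ^ 0) ≤ (q:ℝ)⁻¹ * ‖(1:L)‖
      rw [norm_one, mul_one]
      simp only [pow_zero, mul_one]
      calc ((q:ℝ)⁻¹) ^ 2 ≤ ((q:ℝ)⁻¹) ^ 1 := pow_le_pow_of_le_one hqi0.le hqilt.le one_le_two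
        _ = (q:ℝ)⁻¹ := pow_one _
    | succ m ih =>
      have hDDn : ‖DD q x (m + 1)‖ = (q:ℝ)⁻¹ * ‖DD q x m‖ ^ q := by
        show ‖br q x (m + 1) * DD q x m ^ q‖ = _
        rw [norm_mul, norm_pow, hbr_eq (m + 1) (Nat.le_add_left 1 m)]
      calc ((q:ℝ)⁻¹) ^ (2 * q ^ (m + 1)) = (((q:ℝ)⁻¹) ^ (2 * q ^ m)) ^ q := by
            rw [← pow_mul]; congr 1; ring
        _ ≤ ((q:ℝ)⁻¹ * ‖DD q x m‖) ^ q := pow_le_pow_left₀ (pow_nonneg hqi0.le _) ih q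
        _ = ((q:ℝ)⁻¹) ^ q * ‖DD q x m‖ ^ q := mul_pow _ _ _
        _ ≤ ((q:ℝ)⁻¹) ^ 2 * ‖DD q x m‖ ^ q :=
            mul_le_mul_of_nonneg_right (pow_le_pow_of_le_one hqi0.le hqilt.le hq2)
              (pow_nonneg (norm_nonneg _) _)
        _ = (q:ℝ)⁻¹ * ‖DD q x (m + 1)‖ := by rw [hDDn]; ring
  have hDD : ∀ m, ((q:ℝ)⁻¹) ^ (2 * q ^ m) ≤ ‖DD q x m‖ :=
    fun m => le_trans (hDD' m) (mul_le_of_le_one_left (norm_nonneg _) hqilt.le)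
  -- the constant K
  set K : ℝ := (C ^ r) / (c ^ s * (q:ℝ)⁻¹) with hKdef
  have hden0 : 0 < c ^ s * (q:ℝ)⁻¹ := mul_pos (pow_pos hc0 s) hqi0
  have hK1 : 1 ≤ K := by
    rw [hKdef, le_div_iff₀ hden0, one_mul]
    calc c ^ s * (q:ℝ)⁻¹ ≤ 1 :=
          mul_le_one₀ (pow_le_one₀ hc0.le hc1) hqi0.le hqilt.le
      _ ≤ C ^ r := one_le_pow₀ hC1
  have hK0 : 0 < K := lt_of_lt_of_le one_pos hK1
  -- bound on h m
  have hhm : ∀ m, ‖h m‖ ≤ K ^ (2 * q ^ m) := by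
    intro m
    rw [hh m, norm_div, norm_mul]
    have hnum : ‖∏ i : Fin r, poch q x (a i) m‖ ≤ (C ^ r) ^ (2 * q ^ m) := by
      rw [norm_prod]
      calc ∏ i : Fin r, ‖poch q x (a i) m‖ ≤ ∏ _i : Fin r, C ^ (2 * q ^ m) :=
            Finset.prod_le_prod (fun i _ => norm_nonneg _) (fun i _ => hpochA i m)
        _ = (C ^ (2 * q ^ m)) ^ r := by rw [Finset.prod_const, Finset.card_univ, Fintype.card_fin]
        _ = (C ^ r) ^ (2 * q ^ m) := by rw [← pow_mul, ← pow_mul, Nat.mul_comm]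
    have hden : (c ^ s * (q:ℝ)⁻¹) ^ (2 * q ^ m)
        ≤ ‖∏ j : Fin s, poch q x (b j) m‖ * ‖DD q x m‖ := by
      rw [mul_pow]
      refine mul_le_mul ?_ (hDD m) (pow_nonneg hqi0.le _) (norm_nonneg _)
      rw [norm_prod]
      calc (c ^ s) ^ (2 * q ^ m) = (c ^ (2 * q ^ m)) ^ s := by
            rw [← pow_mul, ← pow_mul, Nat.mul_comm]
        _ = ∏ _j : Fin s, c ^ (2 * q ^ m) := by
            rw [Finset.prod_const, Finset.card_univ, Fintype.card_fin]
        _ ≤ ∏ j : Fin s, ‖poch q x (b j) m‖ :=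
            Finset.prod_le_prod (fun j _ => pow_nonneg hc0.le _) (fun j _ => hpochB j m)
    calc ‖∏ i : Fin r, poch q x (a i) m‖ / (‖∏ j : Fin s, poch q x (b j) m‖ * ‖DD q x m‖)
        ≤ (C ^ r) ^ (2 * q ^ m) / (c ^ s * (q:ℝ)⁻¹) ^ (2 * q ^ m) :=
          div_le_div₀ (pow_nonneg (le_trans zero_le_one (one_le_pow₀ hC1)) _)
            hnum (pow_pos hden0 _) hden
      _ = K ^ (2 * q ^ m) := by rw [hKdef, div_pow]
  -- choose the radius
  refine ⟨(2 * K ^ 2)⁻¹, by positivity, ?_⟩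
  intro z hz
  have hz0 : (0:ℝ) ≤ (2 * K ^ 2)⁻¹ := by positivity
  have hbound : ∀ m, ‖h m * z ^ q ^ m‖ ≤ (2:ℝ)⁻¹ ^ m := by
    intro m
    rw [norm_mul, norm_pow]
    calc ‖h m‖ * ‖z‖ ^ q ^ m ≤ K ^ (2 * q ^ m) * ((2 * K ^ 2)⁻¹) ^ q ^ m :=
          mul_le_mul (hhm m) (pow_le_pow_left₀ (norm_nonneg z) hz _)
            (pow_nonneg (norm_nonneg z) _) (pow_nonneg hK0.le _)
      _ = (K ^ 2 * (2 * K ^ 2)⁻¹) ^ q ^ m := by rw [mul_pow, ← pow_mul]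
      _ = (2:ℝ)⁻¹ ^ q ^ m := by
          congr 1
          field_simp
      _ ≤ (2:ℝ)⁻¹ ^ m := by
          apply pow_le_pow_of_le_one (by norm_num) (by norm_num)
          exact (Nat.lt_pow_self (by omega : 1 < q)).le
  constructor
  · exact squeeze_zero (fun m => norm_nonneg _) hbound
      (tendsto_pow_atTop_nhds_zero_of_lt_one (by norm_num) (by norm_num))
  · intro _
    exact Summable.of_norm_bounded
      (summable_geometric_of_lt_one (by norm_num) (by norm_num)) hbound
end

section
/- For every R ≥ 1 and every μ₁ with 0 < μ₁ ≤ 1 there exist ρ > 0 and a sequence ε_m → 0 such that for all z ∈ L with ‖z‖ ≤ ρ and all parameters a_1,…,a_r, b_1,…,b_s ∈ L satisfying ‖a_i‖ ≤ R (1 ≤ i ≤ r) and ‖b_j − [ν]‖ ≥ μ₁ for all ν ∈ ℕ (1 ≤ j ≤ s), the coefficients h_m = (⟨a_1⟩_m⋯⟨a_r⟩_m)/(⟨b_1⟩_m⋯⟨b_s⟩_m·D_m) satisfy ‖h_m·z^{q^m}‖ ≤ ε_m for all m. Hence for ‖z‖ small the hypergeometric series converges uniformly with respect to the parameters on such sets,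 so ₍r₎F₍s₎ is a locally analytic (in particular continuous) function of its parameters. -/
lemma sum_exp_le (q : ℕ) (hq : 2 ≤ q) :
    ∀ m, ∑ k ∈ Finset.range m, q ^ (m - k) ≤ 2 * q ^ m := by
  intro m
  induction m with
  | zero => simp
  | succ m ih =>
    rw [Finset.sum_range_succ']
    have h1 : ∀ k ∈ Finset.range m, q ^ (m + 1 - (k + 1)) = q ^ (m - k) := by
      intro k hk; congr 1; omega
    rw [Finset.sum_congr rfl h1]
    have h2 : q ^ (m + 1) = q ^ m * q := pow_succ q m
    have h3 : 1 ≤ q ^ m := Nat.one_le_pow _ _ (by omega)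
    simp only [Nat.sub_zero]
    nlinarith [ih]

/-- Uniform convergence of the hypergeometric series with respect to the
parameters: the bound $‖h_m z^{q^m}‖ ≤ ε_m → 0$ holds uniformly for
$‖a_i‖ ≤ R$ and admissible $b_j$ with $‖b_j - [ν]‖ ≥ μ_1$. -/
theorem stmt17 {p v q : ℕ} (hp : p.Prime) (hv : 0 < v) (hq : q = p ^ v)
    {L : Type*} [NormedField L] [CharP L p]
    (hna : ∀ a b : L, ‖a + b‖ ≤ max ‖a‖ ‖b‖)
    (x : L) (hx : ‖x‖ = (q : ℝ)⁻¹)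
    (r s : ℕ) (R : ℝ) (hR : 1 ≤ R) (μ₁ : ℝ) (hμ₁ : 0 < μ₁) (hμ₁' : μ₁ ≤ 1) :
    ∃ ρ : ℝ, 0 < ρ ∧ ∃ ε : ℕ → ℝ, Filter.Tendsto ε Filter.atTop (nhds 0) ∧
      ∀ (z : L) (a : Fin r → L) (b : Fin s → L),
        ‖z‖ ≤ ρ → (∀ i, ‖a i‖ ≤ R) → (∀ (j : Fin s) (ν : ℕ), μ₁ ≤ ‖b j - br q x ν‖) →
        ∀ m : ℕ,
          ‖(∏ i : Fin r, poch q x (a i) m)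
              / ((∏ j : Fin s, poch q x (b j) m) * DD q x m) * z ^ q ^ m‖ ≤ ε m := by
  have hq2 : 2 ≤ q := by
    subst hq
    calc 2 ≤ p := hp.two_le
    _ ≤ p ^ v := Nat.le_self_pow hv.ne' p
  have hqR : (2 : ℝ) ≤ (q : ℝ) := by exact_mod_cast hq2
  have hqpos : (0 : ℝ) < q := by linarith
  have hqinv_pos : (0 : ℝ) < (q : ℝ)⁻¹ := by positivity
  have hqinv_le : ((q : ℝ))⁻¹ ≤ 1 := by
    rw [inv_le_one_iff₀]; right; linarith
  have hxle : ‖x‖ ≤ 1 := by rw [hx]; exact hqinv_le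
  have hRpos : (0 : ℝ) < R := by linarith
  have hsub : ∀ a b : L, ‖a - b‖ ≤ max ‖a‖ ‖b‖ := by
    intro a b
    rw [sub_eq_add_neg]
    simpa using hna a (-b)
  -- upper bound for brackets
  have hbr_le : ∀ k, ‖br q x k‖ ≤ ‖x‖ := by
    intro k
    have h1 : ‖x ^ q ^ k‖ ≤ ‖x‖ := by
      rw [norm_pow]
      exact pow_le_of_le_one (norm_nonneg x) hxle (pow_pos (by omega : 0 < q) k).ne'
    calc ‖br q x k‖ ≤ max ‖x ^ q ^ k‖ ‖x‖ := hsub _ _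
    _ ≤ ‖x‖ := max_le h1 le_rfl
  -- exact norm for brackets k ≥ 1
  have hbr_eq : ∀ k, 1 ≤ k → ‖br q x k‖ = ‖x‖ := by
    intro k hk
    have hxlt : ‖x‖ < 1 := by
      rw [hx]; exact inv_lt_one_of_one_lt₀ (by linarith)
    have hxpos : 0 < ‖x‖ := by rw [hx]; exact hqinv_pos
    have hqk2 : 2 ≤ q ^ k := by
      calc 2 = 2 ^ 1 := rfl
      _ ≤ q ^ k := Nat.pow_le_pow_left hq2 1 |>.trans (Nat.pow_le_pow_right (by omega) hk)
    have h1 : ‖x ^ q ^ k‖ < ‖x‖ := by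
      rw [norm_pow]
      calc ‖x‖ ^ q ^ k ≤ ‖x‖ ^ 2 := pow_le_pow_of_le_one (norm_nonneg x) hxle hqk2
      _ = ‖x‖ * ‖x‖ := sq ‖x‖
      _ < 1 * ‖x‖ := by nlinarith
      _ = ‖x‖ := one_mul _
    refine le_antisymm (hbr_le k) ?_
    by_contra hcon
    push_neg at hcon
    have : ‖x‖ ≤ max ‖x ^ q ^ k‖ ‖br q x k‖ := by
      have h2 := hsub (x ^ q ^ k) (br q x k)
      rw [show x ^ q ^ k - br q x k = x from by rw [br]; ring] at h2
      exact h2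
    rcases max_cases ‖x ^ q ^ k‖ ‖br q x k‖ with ⟨he, _⟩ | ⟨he, _⟩ <;> rw [he] at this <;> linarith
  -- lower bound for the Carlitz factorial
  have hDD : ∀ m, ((q : ℝ)⁻¹) ^ (2 * q ^ m - 1) ≤ ‖DD q x m‖ := by
    intro m
    induction m with
    | zero =>
      show ((q : ℝ)⁻¹) ^ (2 * 1 - 1) ≤ ‖(1 : L)‖
      rw [norm_one]
      simpa using hqinv_le
    | succ m ih =>
      have hA : 1 ≤ q ^ m := Nat.one_le_pow _ _ (by omega)
      have hexp : 1 + (2 * q ^ m - 1) * q ≤ 2 * q ^ (m + 1) - 1 := by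
        have h2 : (2 * q ^ m - 1) * q = 2 * q ^ (m + 1) - q := by
          rw [Nat.sub_mul, pow_succ]; ring_nf
        rw [h2]
        have : q ≤ 2 * q ^ (m + 1) := by
          calc q ≤ q ^ (m + 1) := Nat.le_self_pow (by omega) q
          _ ≤ 2 * q ^ (m + 1) := by omega
        omega
      have hDDm : ‖DD q x (m + 1)‖ = ((q : ℝ)⁻¹) * ‖DD q x m‖ ^ q := by
        show ‖br q x (m + 1) * (DD q x m) ^ q‖ = _
        rw [norm_mul, norm_pow, hbr_eq (m + 1) (by omega), hx]
      rw [hDDm]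
      calc ((q : ℝ)⁻¹) ^ (2 * q ^ (m + 1) - 1)
          ≤ ((q : ℝ)⁻¹) ^ (1 + (2 * q ^ m - 1) * q) :=
            pow_le_pow_of_le_one hqinv_pos.le hqinv_le hexp
      _ = ((q : ℝ)⁻¹) * (((q : ℝ)⁻¹) ^ (2 * q ^ m - 1)) ^ q := by
            rw [pow_add, pow_one, pow_mul]
      _ ≤ ((q : ℝ)⁻¹) * ‖DD q x m‖ ^ q := by
            have := pow_le_pow_left₀ (by positivity) ih q
            nlinarith [this, hqinv_pos]
  -- upper bound for poch with small parameter
  have hpoch_up : ∀ a : L, ‖a‖ ≤ R → ∀ m, ‖poch q x a m‖ ≤ R ^ (2 * q ^ m) := by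
    intro a ha m
    rw [poch, norm_prod]
    calc ∏ k ∈ Finset.range m, ‖(br q x k - a) ^ q ^ (m - k)‖
        ≤ ∏ k ∈ Finset.range m, R ^ q ^ (m - k) := by
          refine Finset.prod_le_prod (fun k _ => norm_nonneg _) (fun k _ => ?_)
          rw [norm_pow]
          refine pow_le_pow_left₀ (norm_nonneg _) ?_ _
          calc ‖br q x k - a‖ ≤ max ‖br q x k‖ ‖a‖ := hsub _ _
          _ ≤ R := max_le ((hbr_le k).trans (hxle.trans hR)) ha
    _ = R ^ (∑ k ∈ Finset.range m, q ^ (m - k)) := Finset.prod_pow_eq_pow_sum _ _ _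
    _ ≤ R ^ (2 * q ^ m) := pow_le_pow_right₀ hR (sum_exp_le q hq2 m)
  -- lower bound for poch with admissible parameter
  have hpoch_lo : ∀ b : L, (∀ ν, μ₁ ≤ ‖b - br q x ν‖) → ∀ m,
      μ₁ ^ (2 * q ^ m) ≤ ‖poch q x b m‖ := by
    intro b hb m
    rw [poch, norm_prod]
    calc μ₁ ^ (2 * q ^ m) ≤ μ₁ ^ (∑ k ∈ Finset.range m, q ^ (m - k)) :=
          pow_le_pow_of_le_one hμ₁.le hμ₁' (sum_exp_le q hq2 m)
    _ = ∏ k ∈ Finset.range m, μ₁ ^ q ^ (m - k) := (Finset.prod_pow_eq_pow_sum _ _ _).symm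
    _ ≤ ∏ k ∈ Finset.range m, ‖(br q x k - b) ^ q ^ (m - k)‖ := by
          refine Finset.prod_le_prod (fun k _ => by positivity) (fun k _ => ?_)
          rw [norm_pow]
          refine pow_le_pow_left₀ hμ₁.le ?_ _
          rw [norm_sub_rev]
          exact hb k
  -- the constant
  set K : ℝ := R ^ (2 * r) * (q : ℝ) ^ 2 / μ₁ ^ (2 * s) with hK
  have hKpos : 0 < K := by positivity
  have hK1 : 1 ≤ K := by
    rw [hK]
    rw [le_div_iff₀ (by positivity)]
    have h1 : μ₁ ^ (2 * s) ≤ 1 := pow_le_one₀ hμ₁.le hμ₁'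
    have h2 : (1 : ℝ) ≤ R ^ (2 * r) := one_le_pow₀ hR
    nlinarith
  refine ⟨(2 * K)⁻¹, by positivity, fun m => (2 : ℝ)⁻¹ ^ m, ?_, ?_⟩
  · exact tendsto_pow_atTop_nhds_zero_of_lt_one (by norm_num) (by norm_num)
  intro z a b hz ha hb m
  have hQm : 1 ≤ q ^ m := Nat.one_le_pow _ _ (by omega)
  -- denominator lower bounds
  have hDD' : ((q : ℝ)⁻¹) ^ (2 * q ^ m) ≤ ‖DD q x m‖ := by
    calc ((q : ℝ)⁻¹) ^ (2 * q ^ m) ≤ ((q : ℝ)⁻¹) ^ (2 * q ^ m - 1) :=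
          pow_le_pow_of_le_one hqinv_pos.le hqinv_le (by omega)
    _ ≤ ‖DD q x m‖ := hDD m
  have hnum : ‖∏ i : Fin r, poch q x (a i) m‖ ≤ (R ^ (2 * q ^ m)) ^ r := by
    rw [norm_prod]
    calc ∏ i : Fin r, ‖poch q x (a i) m‖
        ≤ ∏ _i : Fin r, R ^ (2 * q ^ m) :=
          Finset.prod_le_prod (fun i _ => norm_nonneg _)
            (fun i _ => hpoch_up (a i) (ha i) m)
    _ = (R ^ (2 * q ^ m)) ^ r := by rw [Finset.prod_const, Finset.card_univ, Fintype.card_fin]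
  have hden : (μ₁ ^ (2 * q ^ m)) ^ s * ((q : ℝ)⁻¹) ^ (2 * q ^ m)
      ≤ ‖∏ j : Fin s, poch q x (b j) m‖ * ‖DD q x m‖ := by
    refine mul_le_mul ?_ hDD' (by positivity) (norm_nonneg _)
    rw [norm_prod]
    calc (μ₁ ^ (2 * q ^ m)) ^ s = ∏ _j : Fin s, μ₁ ^ (2 * q ^ m) := by
          rw [Finset.prod_const, Finset.card_univ, Fintype.card_fin]
    _ ≤ ∏ j : Fin s, ‖poch q x (b j) m‖ :=
          Finset.prod_le_prod (fun j _ => by positivity)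
            (fun j _ => hpoch_lo (b j) (hb j) m)
  have hdenpos : (0 : ℝ) < (μ₁ ^ (2 * q ^ m)) ^ s * ((q : ℝ)⁻¹) ^ (2 * q ^ m) := by positivity
  have hKq : (R ^ (2 * q ^ m)) ^ r / ((μ₁ ^ (2 * q ^ m)) ^ s * ((q : ℝ)⁻¹) ^ (2 * q ^ m))
      = K ^ (q ^ m) := by
    rw [hK, div_pow, mul_pow, ← pow_mul, ← pow_mul, ← pow_mul, ← pow_mul, ← pow_mul, inv_pow]
    field_simp
    ring
  have hmain : ‖(∏ i : Fin r, poch q x (a i) m)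
      / ((∏ j : Fin s, poch q x (b j) m) * DD q x m)‖ ≤ K ^ (q ^ m) := by
    rw [norm_div, norm_mul, ← hKq]
    exact div_le_div₀ (by positivity) hnum hdenpos hden
  rw [norm_mul, norm_pow]
  calc ‖(∏ i : Fin r, poch q x (a i) m) / ((∏ j : Fin s, poch q x (b j) m) * DD q x m)‖
        * ‖z‖ ^ q ^ m
      ≤ K ^ (q ^ m) * ((2 * K)⁻¹) ^ (q ^ m) := by
        refine mul_le_mul hmain (pow_le_pow_left₀ (norm_nonneg z) hz _) (by positivity)
          (by positivity)
  _ = (K * (2 * K)⁻¹) ^ (q ^ m) := (mul_pow _ _ _).symm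
  _ = (2 : ℝ)⁻¹ ^ (q ^ m) := by
        congr 1
        field_simp
  _ ≤ (2 : ℝ)⁻¹ ^ m :=
        pow_le_pow_of_le_one (by norm_num) (by norm_num)
          (le_of_lt (Nat.lt_pow_self (by omega : 1 < q) : m < q ^ m))
end
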